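/- Fix T ≥ 1 and N > 0, and suppose C_t > 0 for all t. The minimum value of ∑_{t=0}^{T−1} (T − t) sqrt(C_t / n_t) over positive n_t with ∑ n_t = N equals N^{−1/2} ( ∑_{t=0}^{T−1} ((T − t)² C_t)^{1/3} )^{3/2}. -/

import Mathlib

/-!
Writing `a t = ((T - t)² C t)^{1/3}`, each term is `(T - t) √(C t / n t) = √(a t³ / n t)`.
Radon's inequality (weighted Hölder with exponent `3/2` and weights `n t`) gives
`(∑ a)^{3/2} ≤ √N · ∑ √(a³ / n)`, and equality holds for `n t = N a t / ∑ a`,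
where every term equals `a t · √(∑ a / N)`.
-/

open Real Finset

/-- Radon's inequality, obtained from weighted Hölder applied to `a / w`. -/
theorem rpow_sum_le_rpow_sum_mul_sum_rpow_div {ι : Type*} [Fintype ι] {p : ℝ} (hp : 1 ≤ p)
    {a w : ι → ℝ} (ha : ∀ i, 0 ≤ a i) (hw : ∀ i, 0 < w i) :
    (∑ i, a i) ^ p ≤ (∑ i, w i) ^ (p - 1) * ∑ i, a i ^ p / w i ^ (p - 1) := by
  have hp₀ : 0 < p := by linarith
  have holder := inner_le_weight_mul_Lp_of_nonneg univ hp w (fun i => a i / w i)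
    (fun i => (hw i).le) (fun i => div_nonneg (ha i) (hw i).le)
  have hterm : ∀ i, w i * (a i / w i) ^ p = a i ^ p / w i ^ (p - 1) := fun i => by
    rw [div_rpow (ha i) (hw i).le, rpow_sub_one (hw i).ne']
    field_simp
  simp only [mul_div_cancel₀ _ (hw _).ne', hterm] at holder
  calc (∑ i, a i) ^ p
      ≤ ((∑ i, w i) ^ (1 - p⁻¹) * (∑ i, a i ^ p / w i ^ (p - 1)) ^ p⁻¹) ^ p :=
        rpow_le_rpow (sum_nonneg fun i _ => ha i) holder hp₀.le
    _ = (∑ i, w i) ^ (p - 1) * ∑ i, a i ^ p / w i ^ (p - 1) := by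
        have hW : 0 ≤ ∑ i, w i := sum_nonneg fun i _ => (hw i).le
        have hR : 0 ≤ ∑ i, a i ^ p / w i ^ (p - 1) :=
          sum_nonneg fun i _ => div_nonneg (rpow_nonneg (ha i) _) (rpow_nonneg (hw i).le _)
        rw [mul_rpow (rpow_nonneg hW _) (rpow_nonneg hR _), ← rpow_mul hW, ← rpow_mul hR,
          inv_mul_cancel₀ hp₀.ne', rpow_one, sub_mul, inv_mul_cancel₀ hp₀.ne', one_mul]

theorem rpow_sum_cbrt_le_sqrt_sum_mul_sum_sqrt_div {ι : Type*} [Fintype ι] {c n : ι → ℝ}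
    (hc : ∀ i, 0 ≤ c i) (hn : ∀ i, 0 < n i) :
    (∑ i, c i ^ ((1 : ℝ) / 3)) ^ ((3 : ℝ) / 2) ≤ √(∑ i, n i) * ∑ i, √(c i / n i) := by
  have radon := rpow_sum_le_rpow_sum_mul_sum_rpow_div (p := 3 / 2) (by norm_num)
    (fun i => rpow_nonneg (hc i) ((1 : ℝ) / 3)) hn
  rw [show (3 : ℝ) / 2 - 1 = 1 / 2 by norm_num] at radon
  have hterm : ∀ i, (c i ^ ((1 : ℝ) / 3)) ^ ((3 : ℝ) / 2) / n i ^ ((1 : ℝ) / 2)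
      = √(c i / n i) := fun i => by
    rw [← rpow_mul (hc i), sqrt_eq_rpow, div_rpow (hc i) (hn i).le]
    norm_num
  rw [sqrt_eq_rpow]
  simpa only [hterm] using radon

theorem sum_sqrt_pow_three_div_proportional {ι : Type*} [Fintype ι] {a : ι → ℝ} (ha : ∀ i, 0 < a i)
    {N : ℝ} (hN : 0 < N) (hS : 0 < ∑ i, a i) :
    ∑ i, √(a i ^ 3 / (N * a i / ∑ j, a j)) = (∑ i, a i) * √((∑ i, a i) / N) := by
  rw [sum_mul]
  refine sum_congr rfl fun i _ => ?_
  have h : a i ^ 3 / (N * a i / ∑ j, a j) = a i ^ 2 * ((∑ j, a j) / N) := by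
    field_simp
  rw [h, sqrt_mul (sq_nonneg _), sqrt_sq (ha i).le]

theorem isLeast_sum_sqrt_div {ι : Type*} [Fintype ι] [Nonempty ι] {c : ι → ℝ}
    (hc : ∀ i, 0 < c i) {N : ℝ} (hN : 0 < N) :
    IsLeast {x : ℝ | ∃ n : ι → ℝ, (∀ i, 0 < n i) ∧ (∑ i, n i = N) ∧ x = ∑ i, √(c i / n i)}
      (N ^ (-(1 : ℝ) / 2) * (∑ i, c i ^ ((1 : ℝ) / 3)) ^ ((3 : ℝ) / 2)) := by
  rw [neg_div, rpow_neg hN.le, ← sqrt_eq_rpow]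
  refine ⟨?_, fun x ⟨n, hn, hsum, hx⟩ => ?_⟩
  · set a : ι → ℝ := fun i => c i ^ ((1 : ℝ) / 3)
    have ha : ∀ i, 0 < a i := fun i => rpow_pos_of_pos (hc i) _
    have hS : 0 < ∑ i, a i := sum_pos (fun i _ => ha i) univ_nonempty
    have hc_eq : ∀ i, c i = a i ^ 3 := fun i => by
      rw [← rpow_natCast, ← rpow_mul (hc i).le]
      norm_num
    refine ⟨fun i => N * a i / ∑ j, a j, fun i => div_pos (mul_pos hN (ha i)) hS, ?_, ?_⟩
    · rw [← sum_div, ← mul_sum, mul_div_cancel_right₀ _ hS.ne']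
    · have hS32 : (∑ i, a i) ^ ((3 : ℝ) / 2) = (∑ i, a i) * √(∑ i, a i) := by
        rw [show (3 : ℝ) / 2 = 1 + 1 / 2 by norm_num, rpow_add hS, rpow_one, sqrt_eq_rpow]
      calc (√N)⁻¹ * (∑ i, a i) ^ ((3 : ℝ) / 2) = (∑ i, a i) * √((∑ i, a i) / N) := by
            rw [hS32, sqrt_div hS.le]
            ring
        _ = ∑ i, √(a i ^ 3 / (N * a i / ∑ j, a j)) :=
            (sum_sqrt_pow_three_div_proportional ha hN hS).symm
        _ = ∑ i, √(c i / (N * a i / ∑ j, a j)) := by simp only [hc_eq]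
  · rw [hx, inv_mul_le_iff₀ (sqrt_pos.mpr hN), ← hsum]
    exact rpow_sum_cbrt_le_sqrt_sum_mul_sum_sqrt_div (fun i => (hc i).le) hn

theorem stmt_14 (T : ℕ) (hT : 1 ≤ T) (N : ℝ) (hN : 0 < N)
    (C : Fin T → ℝ) (hC : ∀ t, 0 < C t) :
    IsLeast
      {x : ℝ | ∃ n : Fin T → ℝ, (∀ t, 0 < n t) ∧ (∑ t, n t = N) ∧
        x = ∑ t : Fin T, ((T : ℝ) - t) * Real.sqrt (C t / n t)}
      (N ^ (-(1 : ℝ) / 2) *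
        (∑ t : Fin T, (((T : ℝ) - t) ^ 2 * C t) ^ ((1 : ℝ) / 3)) ^ ((3 : ℝ) / 2)) := by
  have : Nonempty (Fin T) := ⟨⟨0, hT⟩⟩
  have hgap : ∀ t : Fin T, 0 < (T : ℝ) - t := fun t => sub_pos.2 (by exact_mod_cast t.is_lt)
  have hweight : ∀ (t : Fin T) (x : ℝ),
      ((T : ℝ) - t) * √(C t / x) = √(((T : ℝ) - t) ^ 2 * C t / x) := fun t x => by
    rw [mul_div_assoc, sqrt_mul (sq_nonneg _), sqrt_sq (hgap t).le]
  simp only [hweight]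
  exact isLeast_sum_sqrt_div (fun t => mul_pos (pow_pos (hgap t) 2) (hC t)) hN
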